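/- arXiv:1412.7979 — 2 statements merged into one kernel-verified Lean document; each statement's English description precedes it below -/
import Mathlib

section
/- Let n ≥ 1, s > 0, v ∈ ℝⁿ with v ≠ 0, and t > 0. Then s^{-n} · ∫_{{x ∈ ℝⁿ : ⟨x,v⟩ ≥ t‖v‖}} exp(-π‖x‖²/s²) dx ≤ exp(-π t²/s²). In other words, if X is distributed according to the Gaussian density s^{-n}exp(-π‖x‖²/s²) on ℝⁿ, then Pr[⟨X,v⟩ ≥ t‖v‖] ≤ exp(-π(t/s)²). -/
/-!
Completing the square: for a unit vector `u`, `t ≥ 0` and `⟪x, u⟫ ≥ t` one has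
`‖x‖² ≥ ‖x - t • u‖² + t²`, so on the half-space the Gaussian density is dominated by
`exp (-π t² / s²)` times the Gaussian density recentred at `t • u`. The latter has total
mass `sⁿ` by translation invariance of Lebesgue measure.
-/

open MeasureTheory
open scoped RealInnerProductSpace

theorem norm_sub_smul_sq_add_sq_le {V : Type*} [NormedAddCommGroup V] [InnerProductSpace ℝ V]
    {u x : V} (hu : ‖u‖ = 1) {t : ℝ} (ht : 0 ≤ t)
    (hx : t ≤ ⟪x, u⟫) : ‖x - t • u‖ ^ 2 + t ^ 2 ≤ ‖x‖ ^ 2 := by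
  rw [norm_sub_sq_real, real_inner_smul_right, norm_smul, hu, Real.norm_eq_abs, abs_of_nonneg ht]
  nlinarith

section GaussianTail

variable {V : Type*} [NormedAddCommGroup V] [InnerProductSpace ℝ V] [FiniteDimensional ℝ V]
  [MeasurableSpace V] [BorelSpace V]

theorem integral_exp_neg_pi_mul_sq_norm_div_sq {s : ℝ} (hs : 0 < s) :
    ∫ x : V, Real.exp (-Real.pi * ‖x‖ ^ 2 / s ^ 2) = s ^ Module.finrank ℝ V := by
  have h := GaussianFourier.integral_rexp_neg_mul_sq_norm (V := V) (b := Real.pi / s ^ 2)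
    (by positivity)
  rw [div_div_cancel₀ Real.pi_ne_zero, Real.rpow_div_two_eq_sqrt _ (by positivity),
    Real.sqrt_sq hs.le, Real.rpow_natCast] at h
  convert h using 4 with x
  ring

theorem integrable_exp_neg_pi_mul_sq_norm_div_sq {s : ℝ} (hs : 0 < s) :
    Integrable fun x : V ↦ Real.exp (-Real.pi * ‖x‖ ^ 2 / s ^ 2) :=
  Integrable.of_integral_ne_zero <| by
    rw [integral_exp_neg_pi_mul_sq_norm_div_sq hs]; positivity

theorem setIntegral_exp_neg_pi_mul_sq_norm_div_sq_le {u : V} (hu : ‖u‖ = 1) {s t : ℝ}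
    (hs : 0 < s) (ht : 0 ≤ t) :
    ∫ x in {x : V | t ≤ ⟪x, u⟫}, Real.exp (-Real.pi * ‖x‖ ^ 2 / s ^ 2) ≤
      Real.exp (-Real.pi * t ^ 2 / s ^ 2) * s ^ Module.finrank ℝ V := by
  set g : V → ℝ := fun x ↦ Real.exp (-Real.pi * ‖x‖ ^ 2 / s ^ 2)
  have hg : Integrable g := integrable_exp_neg_pi_mul_sq_norm_div_sq hs
  have hdom : Integrable fun x ↦ Real.exp (-Real.pi * t ^ 2 / s ^ 2) * g (x - t • u) :=
    (hg.comp_sub_right (t • u)).const_mul _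
  have hS : MeasurableSet {x : V | t ≤ ⟪x, u⟫} :=
    measurableSet_le measurable_const (continuous_id.inner continuous_const).measurable
  calc ∫ x in {x : V | t ≤ ⟪x, u⟫}, g x
      ≤ ∫ x in {x : V | t ≤ ⟪x, u⟫}, Real.exp (-Real.pi * t ^ 2 / s ^ 2) * g (x - t • u) := by
        refine setIntegral_mono_on hg.integrableOn hdom.integrableOn hS fun x hx ↦ ?_
        rw [← Real.exp_add, Real.exp_le_exp, ← add_div,
          div_le_div_iff_of_pos_right (by positivity)]
        nlinarith [norm_sub_smul_sq_add_sq_le hu ht hx, Real.pi_pos]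
    _ ≤ ∫ x, Real.exp (-Real.pi * t ^ 2 / s ^ 2) * g (x - t • u) :=
        setIntegral_le_integral hdom (.of_forall fun _ ↦ by positivity)
    _ = Real.exp (-Real.pi * t ^ 2 / s ^ 2) * s ^ Module.finrank ℝ V := by
        rw [integral_const_mul, integral_sub_right_eq_self g,
          integral_exp_neg_pi_mul_sq_norm_div_sq hs]

end GaussianTail

theorem gaussian_linear_tail_general (n : ℕ) (s : ℝ) (hs : 0 < s)
    (v : EuclideanSpace ℝ (Fin n)) (hv : v ≠ 0) (t : ℝ) (ht : 0 < t) :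
    (s ^ n)⁻¹ *
        ∫ x in {x : EuclideanSpace ℝ (Fin n) | ⟪x, v⟫ ≥ t * ‖v‖},
          Real.exp (-Real.pi * ‖x‖ ^ 2 / s ^ 2) ≤
      Real.exp (-Real.pi * t ^ 2 / s ^ 2) := by
  have hv_norm : 0 < ‖v‖ := norm_pos_iff.2 hv
  have hu : ‖‖v‖⁻¹ • v‖ = 1 := norm_smul_inv_norm hv
  have hset : {x : EuclideanSpace ℝ (Fin n) | ⟪x, v⟫ ≥ t * ‖v‖} =
      {x | t ≤ ⟪x, ‖v‖⁻¹ • v⟫} := by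
    ext x
    rw [Set.mem_ofPred_eq, Set.mem_ofPred_eq, real_inner_smul_right, ge_iff_le,
      le_inv_mul_iff₀ hv_norm, mul_comm]
  have htail := setIntegral_exp_neg_pi_mul_sq_norm_div_sq_le hu hs ht.le
  rw [finrank_euclideanSpace_fin] at htail
  rw [hset, inv_mul_le_iff₀ (by positivity), mul_comm (s ^ n)]
  exact htail

theorem gaussian_linear_tail (n : ℕ) (hn : 1 ≤ n) (s : ℝ) (hs : 0 < s)
    (v : EuclideanSpace ℝ (Fin n)) (hv : v ≠ 0) (t : ℝ) (ht : 0 < t) :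
    (s ^ n)⁻¹ *
        ∫ x in {x : EuclideanSpace ℝ (Fin n) | ⟪x, v⟫ ≥ t * ‖v‖},
          Real.exp (-Real.pi * ‖x‖ ^ 2 / s ^ 2) ≤
      Real.exp (-Real.pi * t ^ 2 / s ^ 2) :=
  gaussian_linear_tail_general n s hs v hv t ht
end

section
/- Let Λ ⊆ ℝⁿ be a full-rank lattice, let r > 0, and set s = r·sqrt(2π/n). Then Overlap(Λ, r) ≤ 2·ρ_{2s}(Λ \ {0}). -/
open MeasureTheory

/-- The Gaussian measure `γ_s(A) = s^{-n} ∫_A exp(-π‖x‖²/s²) dx`. -/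
noncomputable def gaussMeasure (n : ℕ) (s : ℝ) (A : Set (EuclideanSpace ℝ (Fin n))) : ℝ :=
  (s ^ n)⁻¹ * ∫ x in A, Real.exp (-Real.pi * ‖x‖ ^ 2 / s ^ 2)

/-- The discrete Gaussian mass `ρ_s(A) = ∑_{x ∈ A} exp(-π‖x‖²/s²)`. -/
noncomputable def rhoSet (n : ℕ) (s : ℝ) (A : Set (EuclideanSpace ℝ (Fin n))) : ℝ :=
  ∑' x : A, Real.exp (-Real.pi * ‖(x : EuclideanSpace ℝ (Fin n))‖ ^ 2 / s ^ 2)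

/-- `Λ` is a full-rank lattice in ℝⁿ: the set of integer combinations of an ℝ-basis. -/
def IsLattice {n : ℕ} (Λ : Set (EuclideanSpace ℝ (Fin n))) : Prop :=
  ∃ b : Module.Basis (Fin n) ℝ (EuclideanSpace ℝ (Fin n)),
    Λ = {x | ∃ z : Fin n → ℤ, x = ∑ i, (z i : ℝ) • b i}

/-- The (closed) Voronoi cell of a lattice. -/
def voronoiCell {n : ℕ} (Λ : Set (EuclideanSpace ℝ (Fin n))) :
    Set (EuclideanSpace ℝ (Fin n)) :=
  {x | ∀ y ∈ Λ, ‖x‖ ≤ ‖x - y‖}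

/-- The fraction of a ball of radius `r` centered at a lattice point overlapping with
balls of equal radius centered at all other lattice points. -/
noncomputable def overlapFrac {n : ℕ} (Λ : Set (EuclideanSpace ℝ (Fin n))) (r : ℝ) : ℝ :=
  (volume (⋃ y ∈ Λ \ {0}, Metric.closedBall (0 : EuclideanSpace ℝ (Fin n)) r ∩
      Metric.closedBall y r)).toReal /
    (volume (Metric.closedBall (0 : EuclideanSpace ℝ (Fin n)) r)).toReal


/-!
For `y ≠ 0` the lens `rB ∩ (rB + y)` lies, by the parallelogram law, in the ball of radius
`√(r² - ‖y‖²/4)` about `y/2`, so its volume is at most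
`(1 - ‖y‖²/(4r²))^(n/2) vol(rB) ≤ exp(-n‖y‖²/(8r²)) vol(rB) = ρ_{2s}(y) vol(rB)`.
A union bound over `Λ \ {0}` then gives `Overlap(Λ, r) ≤ ρ_{2s}(Λ \ {0})`, which is even stronger
than the claim by the factor 2.
-/

open Metric Module Real

theorem Real.exp_neg_le_factorial_div_pow {x : ℝ} (hx : 0 < x) (k : ℕ) :
    exp (-x) ≤ k.factorial / x ^ k := by
  rw [exp_neg, inv_le_comm₀ (exp_pos x) (by positivity), inv_div]
  exact pow_div_factorial_le_exp x hx.le k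

theorem Real.sqrt_sq_sub_le_mul_exp {r : ℝ} (hr : 0 < r) (t : ℝ) :
    √(r ^ 2 - t) ≤ r * exp (-t / (2 * r ^ 2)) := by
  rw [sqrt_le_iff]
  refine ⟨by positivity, ?_⟩
  calc r ^ 2 - t = r ^ 2 * (-t / r ^ 2 + 1) := by field_simp; ring
    _ ≤ r ^ 2 * exp (-t / r ^ 2) := by gcongr; exact add_one_le_exp _
    _ = (r * exp (-t / (2 * r ^ 2))) ^ 2 := by
      rw [mul_pow, ← exp_nat_mul]; congr 2; field_simp; ring

section Lens

variable {E : Type*} [NormedAddCommGroup E] [InnerProductSpace ℝ E]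

theorem closedBall_zero_inter_closedBall_subset (r : ℝ) (y : E) :
    closedBall 0 r ∩ closedBall y r ⊆ closedBall ((2 : ℝ)⁻¹ • y) √(r ^ 2 - ‖y‖ ^ 2 / 4) := by
  rintro x ⟨hx₀, hxy⟩
  rw [mem_closedBall_zero_iff] at hx₀
  rw [mem_closedBall, dist_eq_norm] at hxy ⊢
  have hpar := parallelogram_law_with_norm ℝ (x - (2 : ℝ)⁻¹ • y) ((2 : ℝ)⁻¹ • y)
  rw [sub_add_cancel, sub_sub, ← add_smul, norm_smul] at hpar
  norm_num at hpar
  apply le_sqrt_of_sq_le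
  nlinarith [norm_nonneg x, norm_nonneg (x - y)]

variable [FiniteDimensional ℝ E] [MeasurableSpace E] [BorelSpace E]
  (μ : Measure E) [μ.IsAddHaarMeasure]

theorem measure_closedBall_inter_closedBall_le {r : ℝ} (hr : 0 < r) (y : E) :
    μ (closedBall 0 r ∩ closedBall y r) ≤
      ENNReal.ofReal (exp (-(finrank ℝ E / (8 * r ^ 2)) * ‖y‖ ^ 2)) * μ (closedBall 0 r) := by
  have hrad : √(r ^ 2 - ‖y‖ ^ 2 / 4) ^ finrank ℝ E ≤
      exp (-(finrank ℝ E / (8 * r ^ 2)) * ‖y‖ ^ 2) * r ^ finrank ℝ E := by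
    calc _ ≤ (r * exp (-(‖y‖ ^ 2 / 4) / (2 * r ^ 2))) ^ finrank ℝ E := by
          gcongr; exact sqrt_sq_sub_le_mul_exp hr _
      _ = _ := by
          rw [mul_pow, ← exp_nat_mul, mul_comm]; congr 2; field_simp; ring
  calc μ (closedBall 0 r ∩ closedBall y r)
      ≤ μ (closedBall ((2 : ℝ)⁻¹ • y) √(r ^ 2 - ‖y‖ ^ 2 / 4)) :=
        measure_mono (closedBall_zero_inter_closedBall_subset r y)
    _ ≤ _ := by
        rw [Measure.addHaar_closedBall μ _ (sqrt_nonneg _), Measure.addHaar_closedBall μ _ hr.le,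
          ← mul_assoc, ← ENNReal.ofReal_mul (exp_pos _).le]
        gcongr

theorem measure_biUnion_closedBall_inter_closedBall_le {S : Set E} (hS : S.Countable)
    {r : ℝ} (hr : 0 < r) :
    μ (⋃ y ∈ S, closedBall 0 r ∩ closedBall y r) ≤
      (∑' y : S, ENNReal.ofReal (exp (-(finrank ℝ E / (8 * r ^ 2)) * ‖(y : E)‖ ^ 2))) *
        μ (closedBall 0 r) :=
  calc _ ≤ ∑' y : S, μ (closedBall 0 r ∩ closedBall (y : E) r) := measure_biUnion_le μ hS _
    _ ≤ _ := by
      rw [← ENNReal.tsum_mul_right]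
      exact ENNReal.tsum_le_tsum fun y ↦ measure_closedBall_inter_closedBall_le μ hr y

end Lens

theorem ZLattice.summable_exp_neg_mul_norm_sq {E : Type*} [NormedAddCommGroup E]
    [NormedSpace ℝ E] [FiniteDimensional ℝ E] (L : Submodule ℤ E) [DiscreteTopology L]
    {c : ℝ} (hc : 0 < c) :
    Summable fun z : L ↦ exp (-c * ‖(z : E)‖ ^ 2) := by
  set k := finrank ℤ L + 1
  refine .of_norm_bounded_eventually
    ((ZLattice.summable_norm_pow_inv L (2 * k) (by omega)).mul_left (k.factorial / c ^ k)) ?_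
  filter_upwards [Filter.eventually_cofinite_ne 0] with z hz
  have hz' : 0 < ‖(z : E)‖ := by simpa using hz
  calc ‖exp (-c * ‖(z : E)‖ ^ 2)‖ = exp (-(c * ‖(z : E)‖ ^ 2)) := by
        rw [norm_of_nonneg (exp_pos _).le, neg_mul]
    _ ≤ k.factorial / (c * ‖(z : E)‖ ^ 2) ^ k := exp_neg_le_factorial_div_pow (by positivity) k
    _ = k.factorial / c ^ k * ‖z‖⁻¹ ^ (2 * k) := by
        rw [mul_pow, ← pow_mul, inv_pow]; field_simp; rfl

section IsLattice

variable {n : ℕ} {Λ : Set (EuclideanSpace ℝ (Fin n))}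

theorem IsLattice.exists_eq_span (hΛ : IsLattice Λ) :
    ∃ b : Basis (Fin n) ℝ (EuclideanSpace ℝ (Fin n)), Λ = Submodule.span ℤ (Set.range b) := by
  obtain ⟨b, rfl⟩ := hΛ
  refine ⟨b, Set.ext fun x ↦ ?_⟩
  rw [Set.mem_ofPred_eq, SetLike.mem_coe, Submodule.mem_span_range_iff_exists_fun]
  simp only [Int.cast_smul_eq_zsmul, eq_comm]

theorem IsLattice.countable (hΛ : IsLattice Λ) : Λ.Countable := by
  obtain ⟨b, rfl⟩ := hΛ.exists_eq_span
  exact Set.countable_coe_iff.mp (inferInstanceAs (Countable (Submodule.span ℤ (Set.range b))))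

theorem IsLattice.summable_exp_neg_mul_norm_sq (hΛ : IsLattice Λ) {c : ℝ} (hc : 0 < c) :
    Summable fun x : Λ ↦ exp (-c * ‖(x : EuclideanSpace ℝ (Fin n))‖ ^ 2) := by
  obtain ⟨b, rfl⟩ := hΛ.exists_eq_span
  exact ZLattice.summable_exp_neg_mul_norm_sq _ hc

end IsLattice

theorem overlapFrac_le_tsum_exp {n : ℕ} (hn : 0 < n) {Λ : Set (EuclideanSpace ℝ (Fin n))}
    (hΛ : IsLattice Λ) {r : ℝ} (hr : 0 < r) :
    overlapFrac Λ r ≤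
      ∑' y : ↥(Λ \ {0}), exp (-(n / (8 * r ^ 2)) * ‖(y : EuclideanSpace ℝ (Fin n))‖ ^ 2) := by
  have hsum : Summable fun y : ↥(Λ \ {0}) ↦
      exp (-(n / (8 * r ^ 2)) * ‖(y : EuclideanSpace ℝ (Fin n))‖ ^ 2) := by
    have hc : 0 < (n : ℝ) / (8 * r ^ 2) := by positivity
    have hΛsum := hΛ.summable_exp_neg_mul_norm_sq hc
    exact (hΛsum.comp_injective (Set.inclusion_injective Set.sdiff_subset) :)
  have hbound := measure_biUnion_closedBall_inter_closedBall_le volume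
    (hΛ.countable.mono (Set.sdiff_subset : Λ \ {0} ⊆ Λ)) hr
  rw [finrank_euclideanSpace_fin, ← ENNReal.ofReal_tsum_of_nonneg (fun _ ↦ (exp_pos _).le) hsum]
    at hbound
  have hball := (Metric.measure_closedBall_pos volume (0 : EuclideanSpace ℝ (Fin n)) hr).ne'
  rw [overlapFrac, div_le_iff₀ (ENNReal.toReal_pos hball measure_closedBall_lt_top.ne)]
  calc _ ≤ _ := ENNReal.toReal_mono
        (ENNReal.mul_ne_top ENNReal.ofReal_ne_top measure_closedBall_lt_top.ne) hbound
    _ = _ := by rw [ENNReal.toReal_mul, ENNReal.toReal_ofReal (tsum_nonneg fun _ ↦ (exp_pos _).le)]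

theorem overlap_upper_bound (n : ℕ) (hn : 1 ≤ n) (Λ : Set (EuclideanSpace ℝ (Fin n)))
    (hΛ : IsLattice Λ) (r : ℝ) (hr : 0 < r)
    (s : ℝ) (hsdef : s = r * Real.sqrt (2 * Real.pi / n)) :
    overlapFrac Λ r ≤ 2 * rhoSet n (2 * s) (Λ \ {0}) := by
  have hexponent (y : EuclideanSpace ℝ (Fin n)) :
      -π * ‖y‖ ^ 2 / (2 * s) ^ 2 = -(n / (8 * r ^ 2)) * ‖y‖ ^ 2 := by
    have : (0 : ℝ) < n := by exact_mod_cast hn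
    rw [hsdef, mul_pow, mul_pow, sq_sqrt (by positivity)]
    field_simp
    ring
  have hρ : rhoSet n (2 * s) (Λ \ {0}) =
      ∑' y : ↥(Λ \ {0}), exp (-(n / (8 * r ^ 2)) * ‖(y : EuclideanSpace ℝ (Fin n))‖ ^ 2) := by
    simp only [rhoSet, hexponent]
  calc overlapFrac Λ r ≤ rhoSet n (2 * s) (Λ \ {0}) := hρ ▸ overlapFrac_le_tsum_exp hn hΛ hr
    _ ≤ 2 * rhoSet n (2 * s) (Λ \ {0}) :=
      le_mul_of_one_le_left (tsum_nonneg fun _ ↦ (exp_pos _).le) one_le_two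
end
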